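/- If B is a p-basis of A over k, then the module of Kähler differentials Ω_{A/k} is a free A-module with basis {d_{A/k}(b) : b ∈ B}. -/

import Mathlib

open scoped TensorProduct

/-- The monomial `∏ b^(α b)` associated to a finitely supported exponent tuple on `B`. -/
noncomputable def pMonomial {A : Type*} [CommRing A] {B : Set A} (α : B →₀ ℕ) : A :=
  α.prod fun b n => (b : A) ^ n

/-- `B` is `p`-independent over `k`: the `p`-monomials in `B` are linearly independent
over the subring `A^p[k]`. -/
def IsPIndependent (k : Type*) {A : Type*} [CommRing k] [CommRing A] [Algebra k A]
    (p : ℕ) (B : Set A) : Prop :=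
  LinearIndependent (Algebra.adjoin k (Set.range fun a : A => a ^ p))
    (fun α : {α : B →₀ ℕ // ∀ b, α b < p} => pMonomial α.1)

/-- `B` is a `p`-basis of `A` over `k`. -/
def IsPBasis (k : Type*) {A : Type*} [CommRing k] [CommRing A] [Algebra k A]
    (p : ℕ) (B : Set A) : Prop :=
  IsPIndependent k p B ∧
    Algebra.adjoin k ((Set.range fun a : A => a ^ p) ∪ B) = ⊤

/-- An absolute `p`-basis: a `p`-basis over the prime field (equivalently over `ℤ`). -/
def IsAbsolutePBasis {A : Type*} [CommRing A] (p : ℕ) (B : Set A) : Prop :=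
  IsPBasis ℤ p B

/-- `B` is a differential basis of `A` over `k`. -/
def IsDifferentialBasis (k : Type*) {A : Type*} [CommRing k] [CommRing A] [Algebra k A]
    (B : Set A) : Prop :=
  ∃ bas : Module.Basis B A (KaehlerDifferential k A),
    ∀ b : B, bas b = KaehlerDifferential.D k A (b : A)

/-- Regular local ring: noetherian local ring whose maximal ideal is generated by
(Krull-)dimension many elements. -/
def IsRegularLocalRing' (R : Type*) [CommRing R] : Prop :=
  IsLocalRing R ∧ IsNoetherianRing R ∧
    ∃ (n : ℕ) (z : Fin n → R), (Ideal.span (Set.range z)).IsMaximal ∧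
      ringKrullDim R = n

/-- Regular ring: noetherian and all localizations at primes are regular local. -/
def IsRegularRing' (A : Type*) [CommRing A] : Prop :=
  IsNoetherianRing A ∧ ∀ (P : Ideal A) (hP : P.IsPrime), IsRegularLocalRing' (Localization.AtPrime P)

/-- Differential operators of order at most `n` over `k`, defined inductively. -/
def IsDiffOp (k A M : Type*) [CommRing k] [CommRing A] [Algebra k A]
    [AddCommGroup M] [Module A M] [Module k M] [IsScalarTower k A M] :
    ℕ → (A → M) → Prop
  | 0, D => IsLinearMap A D
  | (n + 1), D => IsLinearMap k D ∧
      ∀ a : A, IsDiffOp k A M n (fun f => a • D f - D (a * f))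

/-- Product of binomial coefficients `∏_b C(α_b, β_b)`. -/
noncomputable def pBinom {A : Type*} [CommRing A] {B : Set A} (α β : B →₀ ℕ) : ℕ :=
  letI := Classical.decEq A
  ∏ b ∈ α.support ∪ β.support, Nat.choose (α b) (β b)

/-- Product of multinomial coefficients `∏_b (β_b+β'_b)!/(β_b!β'_b!)`. -/
noncomputable def pMultinom {A : Type*} [CommRing A] {B : Set A} (β β' : B →₀ ℕ) : ℕ :=
  letI := Classical.decEq A
  ∏ b ∈ β.support ∪ β'.support, Nat.choose (β b + β' b) (β b)

/-- Height of an ideal: the infimum of the Krull dimensions of localizations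
at primes containing it. -/
noncomputable def idealHeight {R : Type*} [CommRing R] (I : Ideal R) : WithBot (WithTop ℕ) :=
  ⨅ Q : {Q : Ideal R // Q.IsPrime ∧ I ≤ Q},
    ringKrullDim (Localization (@Ideal.primeCompl R _ Q.1 Q.2.1))

/-- Differential saturation of an ideal by absolute differential operators of order `≤ n`. -/
noncomputable def diffSat {A : Type*} [CommRing A] (n : ℕ) (I : Ideal A) : Ideal A :=
  Ideal.span {g | ∃ f ∈ I, ∃ Δ : A → A, IsDiffOp ℤ A A n Δ ∧ g = Δ f}

/-! Let `C = A^p[k]`. By `p`-independence and generation, the reduced monomials `∏ b ^ α b`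
(`α b < p`) form a `C`-basis of `A`. For `b₀ ∈ B` the `C`-linear map sending a reduced monomial
`m_α` to `α b₀ • m_(α - e_b₀)` obeys the same formula on all monomials, because in characteristic
`p` the factor `m_q ^ p` of `m_(p • q + r)` is a scalar and `p • q` contributes nothing to the
coefficient. Hence it is a derivation `∂_b₀`, and these derivations are dual to the `d b`, which
are therefore linearly independent. They span `Ω_{A/k}` since `d` kills `p`-th powers and `A` is
generated over `k` by `p`-th powers and `B`. -/

theorem Finsupp.exists_eq_nsmul_add_of_lt {ι : Type*} {p : ℕ} (hp : 0 < p) (γ : ι →₀ ℕ) :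
    ∃ q r : ι →₀ ℕ, (∀ i, r i < p) ∧ γ = p • q + r :=
  ⟨γ.mapRange (· / p) (Nat.zero_div p), γ.mapRange (· % p) (Nat.zero_mod p),
    fun _ => Nat.mod_lt _ hp, Finsupp.ext fun i => by simp [Nat.div_add_mod]⟩

theorem LinearMap.leibniz_of_basis {ι R A M : Type*} [CommRing R] [CommRing A] [Algebra R A]
    [AddCommGroup M] [Module A M] [Module R M] [IsScalarTower R A M]
    (D : A →ₗ[R] M) (b : Module.Basis ι R A)
    (h : ∀ i j, D (b i * b j) = b i • D (b j) + b j • D (b i)) (x y : A) :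
    D (x * y) = x • D y + y • D x := by
  let smulD : A →ₗ[R] A →ₗ[R] M := (Algebra.lsmul R R M).toLinearMap.compl₂ D
  have hbil : (LinearMap.mul R A).compr₂ D = smulD + smulD.flip :=
    LinearMap.ext_basis b b fun i j => h i j
  exact LinearMap.congr_fun₂ hbil x y

theorem Derivation.map_pow_char {R A M : Type*} [CommSemiring R] [CommSemiring A] [Algebra R A]
    [AddCommMonoid M] [Module A M] [Module R M] [IsScalarTower R A M]
    (p : ℕ) [CharP A p] (D : Derivation R A M) (a : A) : D (a ^ p) = 0 := by
  rw [D.leibniz_pow, ← Nat.cast_smul_eq_nsmul A, CharP.cast_eq_zero A p, zero_smul]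

theorem KaehlerDifferential.eq_top_of_adjoin_eq_top {R S : Type*} [CommRing R] [CommRing S]
    [Algebra R S] {s : Set S} (hs : Algebra.adjoin R s = ⊤) {N : Submodule S Ω[S⁄R]}
    (hN : ∀ x ∈ s, KaehlerDifferential.D R S x ∈ N) : N = ⊤ := by
  rw [eq_top_iff, ← KaehlerDifferential.span_range_derivation, Submodule.span_le]
  rintro _ ⟨x, rfl⟩
  have hx : x ∈ Algebra.adjoin R s := hs ▸ trivial
  induction hx using Algebra.adjoin_induction with
  | mem x hx => exact hN x hx
  | algebraMap r => simp
  | add x y _ _ hx hy => simpa using N.add_mem hx hy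
  | mul x y _ _ hx hy =>
    rw [SetLike.mem_coe, Derivation.leibniz]
    exact N.add_mem (N.smul_mem _ hy) (N.smul_mem _ hx)

section pMonomial

variable {A : Type*} [CommRing A] {B : Set A}

theorem pMonomial_zero : pMonomial (0 : B →₀ ℕ) = 1 := Finsupp.prod_zero_index

theorem pMonomial_add (α β : B →₀ ℕ) : pMonomial (α + β) = pMonomial α * pMonomial β :=
  Finsupp.prod_add_index' (fun _ => pow_zero _) (fun _ m n => pow_add _ m n)

theorem pMonomial_single_one (b : B) : pMonomial (Finsupp.single b 1) = (b : A) := by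
  simp [pMonomial, Finsupp.prod_single_index]

theorem pMonomial_nsmul (p : ℕ) (q : B →₀ ℕ) : pMonomial (p • q) = pMonomial q ^ p := by
  induction p with
  | zero => simp [pMonomial_zero]
  | succ n ih => rw [succ_nsmul, pMonomial_add, ih, pow_succ]

theorem natCast_mul_pMonomial_add_tsub_single (γ δ : B →₀ ℕ) (b : B) :
    (δ b : A) * pMonomial (γ + δ - Finsupp.single b 1)
      = pMonomial γ * ((δ b : A) * pMonomial (δ - Finsupp.single b 1)) := by
  rcases Nat.eq_zero_or_pos (δ b) with h0 | h0
  · simp [h0]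
  · rw [add_tsub_assoc_of_le (Finsupp.single_le_iff.mpr h0), pMonomial_add]
    ring

end pMonomial

/-- The subring `A^p[k]` of `A`. -/
abbrev adjoinPowers (k A : Type*) [CommRing k] [CommRing A] [Algebra k A] (p : ℕ) :
    Subalgebra k A :=
  Algebra.adjoin k (Set.range fun a : A => a ^ p)

abbrev ReducedExponents {A : Type*} (B : Set A) (p : ℕ) : Type _ :=
  {α : B →₀ ℕ // ∀ b, α b < p}

section PBasis

variable {k A : Type*} [CommRing k] [CommRing A] [Algebra k A] {p : ℕ} {B : Set A}

theorem pow_mem_adjoinPowers (a : A) : a ^ p ∈ adjoinPowers k A p :=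
  Algebra.subset_adjoin ⟨a, rfl⟩

theorem pMonomial_nsmul_add (q r : B →₀ ℕ) :
    pMonomial (p • q + r) = (⟨pMonomial q ^ p, pow_mem_adjoinPowers _⟩ : adjoinPowers k A p) •
      pMonomial r := by
  rw [pMonomial_add, pMonomial_nsmul]
  rfl

theorem pMonomial_mem_span_reduced (hp : 0 < p) (γ : B →₀ ℕ) :
    pMonomial γ ∈ Submodule.span (adjoinPowers k A p)
      (Set.range fun α : ReducedExponents B p => pMonomial α.1) := by
  obtain ⟨q, r, hr, rfl⟩ := γ.exists_eq_nsmul_add_of_lt hp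
  rw [pMonomial_nsmul_add (k := k)]
  exact Submodule.smul_mem _ _ (Submodule.subset_span ⟨⟨r, hr⟩, rfl⟩)

theorem span_reduced_pMonomial_eq_top (hp : 0 < p)
    (hgen : Algebra.adjoin k ((Set.range fun a : A => a ^ p) ∪ B) = ⊤) :
    Submodule.span (adjoinPowers k A p)
      (Set.range fun α : ReducedExponents B p => pMonomial α.1) = ⊤ := by
  set N := Submodule.span (adjoinPowers k A p)
    (Set.range fun α : ReducedExponents B p => pMonomial α.1)
  have hmono : ∀ γ : B →₀ ℕ, pMonomial γ ∈ N := pMonomial_mem_span_reduced hp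
  have hsmul : ∀ c : adjoinPowers k A p, (c : A) ∈ N := fun c => by
    simpa [pMonomial_zero, Algebra.smul_def] using N.smul_mem c (hmono 0)
  rw [eq_top_iff]
  rintro x -
  have hx : x ∈ Algebra.adjoin k ((Set.range fun a : A => a ^ p) ∪ B) := hgen ▸ trivial
  induction hx using Algebra.adjoin_induction with
  | mem x hx =>
    rcases hx with ⟨a, rfl⟩ | hb
    · exact hsmul ⟨_, pow_mem_adjoinPowers a⟩
    · simpa [pMonomial_single_one] using hmono (Finsupp.single ⟨x, hb⟩ 1)
  | algebraMap r => exact hsmul (algebraMap k _ r)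
  | add x y _ _ hx hy => exact N.add_mem hx hy
  | mul x y _ _ hx hy =>
    have hxy : x * y ∈ N * N := Submodule.mul_mem_mul hx hy
    rw [Submodule.span_mul_span] at hxy
    refine Submodule.span_le.mpr ?_ hxy
    rintro _ ⟨_, ⟨α, rfl⟩, _, ⟨β, rfl⟩, rfl⟩
    show pMonomial α.1 * pMonomial β.1 ∈ N
    exact pMonomial_add α.1 β.1 ▸ hmono _

end PBasis

theorem span_range_D_eq_top_of_adjoin_pow_union {k A : Type*} [CommRing k] [CommRing A]
    [Algebra k A] (p : ℕ) [CharP A p] {B : Set A}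
    (hgen : Algebra.adjoin k ((Set.range fun a : A => a ^ p) ∪ B) = ⊤) :
    Submodule.span A (Set.range fun b : B => KaehlerDifferential.D k A b) = ⊤ :=
  KaehlerDifferential.eq_top_of_adjoin_eq_top hgen fun x hx => by
    rcases hx with ⟨a, rfl⟩ | hb
    · rw [Derivation.map_pow_char p]
      exact zero_mem _
    · exact Submodule.subset_span ⟨⟨x, hb⟩, rfl⟩

theorem KaehlerDifferential.linearIndependent_D_of_dual {ι R S : Type*} [CommRing R] [CommRing S]
    [Algebra R S] (x : ι → S) (d : ι → Derivation R S S) (hself : ∀ i, d i (x i) = 1)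
    (hne : ∀ i j, i ≠ j → d j (x i) = 0) :
    LinearIndependent S fun i => KaehlerDifferential.D R S (x i) := by
  classical
  let ev : Ω[S⁄R] →ₗ[S] ι → S := LinearMap.pi fun j => (d j).liftKaehlerDifferential
  refine LinearIndependent.of_comp ev ?_
  convert Pi.linearIndependent_single_one ι S with i
  ext j
  rcases eq_or_ne i j with rfl | hij
  · simp [ev, hself]
  · simp [ev, hne i j hij, hij.symm]

namespace IsPBasis

variable {k A : Type*} [CommRing k] [CommRing A] [Algebra k A] {p : ℕ} {B : Set A}
  (h : IsPBasis k p B) (hp : 0 < p)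

noncomputable def pMonomialBasis :
    Module.Basis (ReducedExponents B p) (adjoinPowers k A p) A :=
  Module.Basis.mk h.1 (span_reduced_pMonomial_eq_top hp h.2).ge

theorem pMonomialBasis_apply (α : ReducedExponents B p) :
    h.pMonomialBasis hp α = pMonomial α.1 :=
  Module.Basis.mk_apply _ _ _

noncomputable def partialDerivLinear (b₀ : B) : A →ₗ[adjoinPowers k A p] A :=
  (h.pMonomialBasis hp).constr ℕ fun α => (α.1 b₀ : A) * pMonomial (α.1 - Finsupp.single b₀ 1)

variable [CharP A p]

theorem partialDerivLinear_pMonomial (b₀ : B) (γ : B →₀ ℕ) :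
    h.partialDerivLinear hp b₀ (pMonomial γ)
      = (γ b₀ : A) * pMonomial (γ - Finsupp.single b₀ 1) := by
  obtain ⟨q, r, hr, rfl⟩ := γ.exists_eq_nsmul_add_of_lt hp
  have hcoeff : ((p • q + r) b₀ : A) = r b₀ := by simp [CharP.cast_eq_zero]
  rw [pMonomial_nsmul_add (k := k), map_smul, ← h.pMonomialBasis_apply hp ⟨r, hr⟩,
    partialDerivLinear, Module.Basis.constr_basis, hcoeff,
    natCast_mul_pMonomial_add_tsub_single, pMonomial_nsmul]
  rfl

theorem partialDerivLinear_pMonomial_mul (b₀ : B) (γ δ : B →₀ ℕ) :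
    h.partialDerivLinear hp b₀ (pMonomial γ * pMonomial δ)
      = pMonomial γ • h.partialDerivLinear hp b₀ (pMonomial δ)
        + pMonomial δ • h.partialDerivLinear hp b₀ (pMonomial γ) := by
  simp only [← pMonomial_add, partialDerivLinear_pMonomial, smul_eq_mul,
    ← natCast_mul_pMonomial_add_tsub_single, Finsupp.add_apply, Nat.cast_add, add_comm δ γ]
  ring

noncomputable def partialDeriv (b₀ : B) : Derivation k A A :=
  (Derivation.mk' (h.partialDerivLinear hp b₀) <|
    (h.partialDerivLinear hp b₀).leibniz_of_basis (h.pMonomialBasis hp) fun α β => by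
      simpa only [pMonomialBasis_apply] using h.partialDerivLinear_pMonomial_mul hp b₀ α.1 β.1
    ).restrictScalars k

theorem partialDeriv_apply_self (b : B) : h.partialDeriv hp b b = 1 := by
  show h.partialDerivLinear hp b b = 1
  simp [← pMonomial_single_one b, partialDerivLinear_pMonomial, pMonomial_zero]

theorem partialDeriv_apply_of_ne {b₀ b : B} (hb : b ≠ b₀) : h.partialDeriv hp b₀ b = 0 := by
  show h.partialDerivLinear hp b₀ b = 0
  simp [← pMonomial_single_one b, partialDerivLinear_pMonomial, Finsupp.single_eq_of_ne' hb]

end IsPBasis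

theorem statement4 {k A : Type*} [CommRing k] [CommRing A] [Algebra k A]
    (p : ℕ) [Fact p.Prime] [CharP A p] (B : Set A) (h : IsPBasis k p B) :
    IsDifferentialBasis k B := by
  have hp : 0 < p := (Fact.out : p.Prime).pos
  have hli := KaehlerDifferential.linearIndependent_D_of_dual (fun b : B => (b : A))
    (h.partialDeriv hp) (h.partialDeriv_apply_self hp) fun _ _ => h.partialDeriv_apply_of_ne hp
  exact ⟨.mk hli (span_range_D_eq_top_of_adjoin_pow_union p h.2).ge, Module.Basis.mk_apply _ _⟩
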